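/- (Main theorem, generalised aggregating algorithm bound.) Let Θ be a finite nonempty set, X a set of observations, Δ_X a set of predictions, and ℓ : Δ_X → ℝ^X a loss. Let Φ : Δ_Θ → ℝ be a differentiable entropy with differentiable conjugate Φ*, satisfying ∇Φ(∇Φ*(v)) − v ∈ ℝ·𝟏, ∇Φ*(v + α𝟏) = ∇Φ*(v), and the Fenchel–Young equality Φ*(∇Φ(μ)) = ⟨μ, ∇Φ(μ)⟩ − Φ(μ) on the relative interior of Δ_Θ. Suppose ℓ is Φ-mixable. Fix π in the relative interior of Δ_Θ, observations x¹, …, x^T ∈ X, and expert predictions p^t_θ ∈ Δ_X for t = 1, …, T and θ ∈ Θ; set α^t(θ) := ℓ_{x^t}(p^t_θ), μ⁰ := π and μ^t := ∇Φ*(∇Φ(μ^{t−1}) − α^t). Suppose p¹, …, p^T ∈ Δ_X satisfy the mixability inequality ℓ_{x^t}(p^t) ≤ −Φ*(−λ^Φ(μ^{t−1}) − α^t) for each t (such p^t exist by Φ-mixability). Then for every θ ∈ Θ: Σ_{t=1}^T ℓ_{x^t}(p^t) ≤ Σ_{t=1}^T ℓ_{x^t}(p^t_θ) + D_Φ(δ_θ,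 π), where δ_θ is the point mass on θ. -/

import Mathlib

open Finset

/-- The probability simplex over a finite set `Θ`. -/
def probSimplex (Θ : Type*) [Fintype Θ] : Set (Θ → ℝ) :=
  {μ | (∀ θ, 0 ≤ μ θ) ∧ ∑ θ, μ θ = 1}

/-- The relative interior of the probability simplex. -/
def probSimplexRI (Θ : Type*) [Fintype Θ] : Set (Θ → ℝ) :=
  {μ | (∀ θ, 0 < μ θ) ∧ ∑ θ, μ θ = 1}

/-- Standard inner product on `ℝ^Θ`. -/
noncomputable def ip {Θ : Type*} [Fintype Θ] (v w : Θ → ℝ) : ℝ := ∑ θ, v θ * w θ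

/-- Convex conjugate of a function on the probability simplex:
`Φ*(v) = sup_{μ ∈ Δ_Θ} ⟨μ, v⟩ − Φ(μ)`. -/
noncomputable def conjF {Θ : Type*} [Fintype Θ] (Φ : (Θ → ℝ) → ℝ) (v : Θ → ℝ) : ℝ :=
  sSup ((fun μ => ip μ v - Φ μ) '' probSimplex Θ)

/-- The continuous linear functional `w ↦ ⟨g, w⟩` associated with a vector `g : Θ → ℝ`;
used to express that `g` is a gradient. -/
noncomputable def toCLM {Θ : Type*} [Fintype Θ] (g : Θ → ℝ) : (Θ → ℝ) →L[ℝ] ℝ :=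
  ∑ θ, g θ • (ContinuousLinearMap.proj θ : (Θ → ℝ) →L[ℝ] ℝ)

/-- Bregman divergence `D_Φ(μ', μ) = Φ(μ') − Φ(μ) − ⟨∇Φ(μ), μ' − μ⟩`, where the
gradient of `Φ` is given by `g`. -/
noncomputable def bregDiv {Θ : Type*} [Fintype Θ] (Φ : (Θ → ℝ) → ℝ)
    (g : (Θ → ℝ) → Θ → ℝ) (μ' μ : Θ → ℝ) : ℝ :=
  Φ μ' - Φ μ - ip (g μ) (fun θ => μ' θ - μ θ)

/-- The proper loss `λ^Φ(μ) = Φ*(∇Φ(μ))·𝟏 − ∇Φ(μ)` associated with entropy `Φ`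
with gradient `g`. -/
noncomputable def lamLoss {Θ : Type*} [Fintype Θ] (Φ : (Θ → ℝ) → ℝ)
    (g : (Θ → ℝ) → Θ → ℝ) (μ : Θ → ℝ) : Θ → ℝ :=
  fun θ => conjF Φ (g μ) - g μ θ

/-- Negative Shannon entropy `(−H)(μ) = ∑ θ, μ(θ) log μ(θ)` (with `0 log 0 = 0`,
since `Real.log 0 = 0`). -/
noncomputable def negH {Θ : Type*} [Fintype Θ] (μ : Θ → ℝ) : ℝ :=
  ∑ θ, μ θ * Real.log (μ θ)

/-!
On the simplex, `⟨μ, 𝟏⟩ = 1` makes `Φ*` equivariant under shifts along `𝟏`, and `∇Φ(μ^t)` is,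
up to such a shift, the cumulative score `w^t = ∇Φ(π) − ∑_{s<t} α^s`. Hence the mixability
inequality of round `t` reads `ℓ_{x^t}(p^t) ≤ Φ*(w^t) − Φ*(w^{t+1})`, and the regret telescopes
to `Φ*(∇Φ(π)) − Φ*(w^T)`. Fenchel–Young is an equality at `π` and an inequality at `δ_θ`,
which bounds this by `∑_t α^t(θ) + D_Φ(δ_θ, π)`.
-/

theorem ConvexOn.add_le_of_hasFDerivWithinAt {E : Type*} [NormedAddCommGroup E]
    [NormedSpace ℝ E] {s : Set E} {f : E → ℝ} {f' : E →L[ℝ] ℝ} {x y : E} (hf : ConvexOn ℝ s f)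
    (hx : x ∈ s) (hy : y ∈ s) (hd : HasFDerivWithinAt f f' s x) :
    f x + f' (y - x) ≤ f y := by
  have hmaps : Set.MapsTo (AffineMap.lineMap x y) (Set.Icc (0 : ℝ) 1) s :=
    fun t ht => hf.1.lineMap_mem hx hy ht
  have hconv : ConvexOn ℝ (Set.Icc (0 : ℝ) 1) (f ∘ AffineMap.lineMap x y) :=
    (hf.comp_affineMap (AffineMap.lineMap x y)).subset hmaps (convex_Icc 0 1)
  have hd₀ : HasFDerivWithinAt f f' s (AffineMap.lineMap x y (0 : ℝ)) := by simpa using hd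
  have hslope := hconv.le_slope_of_hasDerivWithinAt (Set.left_mem_Icc.2 zero_le_one)
    (Set.right_mem_Icc.2 zero_le_one) zero_lt_one
    (hd₀.comp_hasDerivWithinAt 0 AffineMap.hasDerivWithinAt_lineMap hmaps)
  simp only [slope_def_field, Function.comp_apply, AffineMap.lineMap_apply_zero,
    AffineMap.lineMap_apply_one, sub_zero, div_one] at hslope
  linarith

section Simplex

variable {Θ : Type*} [Fintype Θ]

lemma toCLM_apply (g u : Θ → ℝ) : toCLM g u = ip g u := by
  simp [toCLM, ip]

lemma convex_probSimplex : Convex ℝ (probSimplex Θ) := by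
  intro a ha b hb s t hs ht hst
  refine ⟨fun θ => add_nonneg (mul_nonneg hs (ha.1 θ)) (mul_nonneg ht (hb.1 θ)), ?_⟩
  simp only [Pi.add_apply, Pi.smul_apply, smul_eq_mul]
  rw [sum_add_distrib, ← mul_sum, ← mul_sum, ha.2, hb.2, mul_one, mul_one, hst]

lemma probSimplexRI_subset : probSimplexRI Θ ⊆ probSimplex Θ :=
  fun _ hμ => ⟨fun θ => (hμ.1 θ).le, hμ.2⟩

lemma single_mem_probSimplex [DecidableEq Θ] (θ : Θ) :
    (Pi.single θ 1 : Θ → ℝ) ∈ probSimplex Θ := by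
  refine ⟨fun θ' => ?_, by simp [Pi.single_apply]⟩
  rcases eq_or_ne θ' θ with rfl | h <;> simp [*]

lemma ip_single [DecidableEq Θ] (θ : Θ) (v : Θ → ℝ) : ip (Pi.single θ 1) v = v θ := by
  simp [ip, Pi.single_apply]

lemma ip_le_sum_abs {μ : Θ → ℝ} (hμ : μ ∈ probSimplex Θ) (v : Θ → ℝ) :
    ip μ v ≤ ∑ θ, |v θ| := by
  refine sum_le_sum fun θ _ => ?_
  have hμ₁ : μ θ ≤ 1 := hμ.2 ▸ single_le_sum (fun i _ => hμ.1 i) (mem_univ θ)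
  calc μ θ * v θ ≤ μ θ * |v θ| := mul_le_mul_of_nonneg_left (le_abs_self _) (hμ.1 θ)
    _ ≤ |v θ| := mul_le_of_le_one_left (abs_nonneg _) hμ₁

lemma ip_add_smul_one {μ : Θ → ℝ} (hμ : μ ∈ probSimplex Θ) (v : Θ → ℝ) (c : ℝ) :
    ip μ (v + c • 1) = ip μ v + c := by
  simp only [ip, Pi.add_apply, Pi.smul_apply, Pi.one_apply, smul_eq_mul, mul_one, mul_add,
    sum_add_distrib, ← sum_mul, hμ.2, one_mul]

variable {Φ : (Θ → ℝ) → ℝ}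

/-- A supporting hyperplane of `Φ` at one point of the simplex bounds the supremum defining
`Φ*` at every `v`. -/
lemma bddAbove_conjF_image {g π : Θ → ℝ} (hconv : ConvexOn ℝ (probSimplex Θ) Φ)
    (hπ : π ∈ probSimplex Θ) (hd : HasFDerivWithinAt Φ (toCLM g) (probSimplex Θ) π)
    (v : Θ → ℝ) : BddAbove ((fun μ => ip μ v - Φ μ) '' probSimplex Θ) := by
  refine ⟨(∑ θ, |v θ - g θ|) + ip g π - Φ π, ?_⟩
  rintro _ ⟨ν, hν, rfl⟩
  have hsupp := hconv.add_le_of_hasFDerivWithinAt hπ hν hd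
  have hsplit : ip ν v - ip g (ν - π) = ip ν (v - g) + ip g π := by
    simp only [ip, Pi.sub_apply, ← sum_sub_distrib, ← sum_add_distrib]
    exact sum_congr rfl fun θ _ => by ring
  rw [toCLM_apply] at hsupp
  have habs := ip_le_sum_abs hν (v - g)
  simp only [Pi.sub_apply] at habs
  dsimp only
  linarith

lemma ip_sub_le_conjF {v μ : Θ → ℝ}
    (hbdd : BddAbove ((fun μ => ip μ v - Φ μ) '' probSimplex Θ)) (hμ : μ ∈ probSimplex Θ) :
    ip μ v - Φ μ ≤ conjF Φ v :=
  le_csSup hbdd ⟨μ, hμ, rfl⟩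

lemma conjF_add_smul_one (hne : (probSimplex Θ).Nonempty) {v : Θ → ℝ}
    (hbdd : BddAbove ((fun μ => ip μ v - Φ μ) '' probSimplex Θ)) (c : ℝ) :
    conjF Φ (v + c • 1) = conjF Φ v + c := by
  have himage : (fun μ => ip μ (v + c • 1) - Φ μ) '' probSimplex Θ
      = OrderIso.addRight c '' ((fun μ => ip μ v - Φ μ) '' probSimplex Θ) := by
    rw [Set.image_image]
    refine Set.image_congr fun μ hμ => ?_
    simp only [OrderIso.addRight_apply, ip_add_smul_one hμ]
    ring
  rw [conjF, himage, ← OrderIso.map_csSup' _ (hne.image _) hbdd, OrderIso.addRight_apply,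
    conjF]

lemma conjF_neg_lamLoss_sub {gradΦ : (Θ → ℝ) → Θ → ℝ}
    (htr : ∀ (v : Θ → ℝ) (c : ℝ), conjF Φ (v + c • 1) = conjF Φ v + c)
    {μ w : Θ → ℝ} {c : ℝ} (hμ : gradΦ μ = w + c • 1) (α : Θ → ℝ) :
    conjF Φ (fun θ => -lamLoss Φ gradΦ μ θ - α θ) = conjF Φ (w - α) - conjF Φ w := by
  have harg : (fun θ => -lamLoss Φ gradΦ μ θ - α θ)
      = (w - α) + (c - conjF Φ (gradΦ μ)) • 1 := by
    funext θ
    simp only [lamLoss, hμ, Pi.add_apply, Pi.sub_apply, Pi.smul_apply, Pi.one_apply,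
      smul_eq_mul, mul_one]
    ring
  rw [harg, htr, hμ, htr]
  ring

lemma conjF_sub_conjF_le_add_bregDiv [DecidableEq Θ] {gradΦ : (Θ → ℝ) → Θ → ℝ} {π : Θ → ℝ}
    (hFY : conjF Φ (gradΦ π) = ip π (gradΦ π) - Φ π)
    (hbdd : ∀ v, BddAbove ((fun μ => ip μ v - Φ μ) '' probSimplex Θ)) (v : Θ → ℝ) (θ : Θ) :
    conjF Φ (gradΦ π) - conjF Φ (gradΦ π - v) ≤ v θ + bregDiv Φ gradΦ (Pi.single θ 1) π := by
  have hlow := ip_sub_le_conjF (hbdd (gradΦ π - v)) (single_mem_probSimplex θ)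
  have hlin : ip (gradΦ π) (fun θ' => (Pi.single θ 1 : Θ → ℝ) θ' - π θ')
      = gradΦ π θ - ip π (gradΦ π) := by
    simp only [ip, mul_sub, sum_sub_distrib, mul_comm (gradΦ π _) (π _)]
    simp [Pi.single_apply]
  rw [ip_single, Pi.sub_apply] at hlow
  rw [bregDiv, hlin]
  linarith

end Simplex

section Updates

variable {Θ : Type*}

def cumScore (g₀ : Θ → ℝ) (α : ℕ → Θ → ℝ) (t : ℕ) : Θ → ℝ :=
  g₀ - ∑ s ∈ range t, α s

lemma cumScore_zero (g₀ : Θ → ℝ) (α : ℕ → Θ → ℝ) : cumScore g₀ α 0 = g₀ := by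
  simp [cumScore]

lemma cumScore_succ (g₀ : Θ → ℝ) (α : ℕ → Θ → ℝ) (t : ℕ) :
    cumScore g₀ α (t + 1) = cumScore g₀ α t - α t := by
  simp only [cumScore, sum_range_succ, sub_add_eq_sub_sub]

/-- `∇Φ*` ignores shifts along `𝟏` and `∇Φ ∘ ∇Φ*` only adds one, so the shift picked up in
one round never matters for the next. -/
lemma exists_grad_eq_cumScore_add {gradΦ gradConj : (Θ → ℝ) → Θ → ℝ}
    (hinv₂ : ∀ v : Θ → ℝ, ∃ c : ℝ, gradΦ (gradConj v) = v + c • (1 : Θ → ℝ))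
    (htrans : ∀ (v : Θ → ℝ) (α : ℝ), gradConj (v + α • (1 : Θ → ℝ)) = gradConj v)
    {π : Θ → ℝ} {α : ℕ → Θ → ℝ} {μ : ℕ → Θ → ℝ} {T : ℕ} (h0 : μ 0 = π)
    (hrec : ∀ t < T, μ (t + 1) = gradConj (gradΦ (μ t) - α t)) :
    ∀ t ≤ T, ∃ c : ℝ, gradΦ (μ t) = cumScore (gradΦ π) α t + c • 1
  | 0, _ => ⟨0, by simp [h0, cumScore_zero]⟩
  | t + 1, ht => by
    obtain ⟨c, hc⟩ := exists_grad_eq_cumScore_add hinv₂ htrans h0 hrec t (by omega)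
    have hμ : μ (t + 1) = gradConj (cumScore (gradΦ π) α (t + 1)) := by
      rw [hrec t (by omega), hc, cumScore_succ, add_sub_right_comm, htrans]
    obtain ⟨c', hc'⟩ := hinv₂ (cumScore (gradΦ π) α (t + 1))
    exact ⟨c', hμ ▸ hc'⟩

end Updates

theorem generalised_aggregating_algorithm_regret_general
    {Θ : Type*} [Fintype Θ] [DecidableEq Θ] {X P : Type*}
    (ℓ : P → X → ℝ)
    (Φ : (Θ → ℝ) → ℝ) (gradΦ gradConj : (Θ → ℝ) → Θ → ℝ)
    (hconv : ConvexOn ℝ (probSimplex Θ) Φ)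
    (hdiff : ∀ μ ∈ probSimplexRI Θ,
      HasFDerivWithinAt Φ (toCLM (gradΦ μ)) (probSimplex Θ) μ)
    (hinv₂ : ∀ v : Θ → ℝ, ∃ c : ℝ, gradΦ (gradConj v) = v + c • (1 : Θ → ℝ))
    (htrans : ∀ (v : Θ → ℝ) (α : ℝ), gradConj (v + α • (1 : Θ → ℝ)) = gradConj v)
    (hFY : ∀ μ ∈ probSimplexRI Θ, conjF Φ (gradΦ μ) = ip μ (gradΦ μ) - Φ μ)
    -- the game: prior, observations, expert predictions
    (π : Θ → ℝ) (hπ : π ∈ probSimplexRI Θ)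
    (T : ℕ) (x : ℕ → X) (p : ℕ → Θ → P)
    -- the GAA mixture updates `μ^t = ∇Φ*(∇Φ(μ^{t−1}) − α^t)` with `α^t(θ) = ℓ_{x^t}(p^t_θ)`
    (μ : ℕ → Θ → ℝ) (h0 : μ 0 = π)
    (hrec : ∀ t < T, μ (t + 1) = gradConj (gradΦ (μ t) - fun θ => ℓ (p t θ) (x t)))
    -- the GAA predictions, satisfying the mixability inequality each round
    (q : ℕ → P)
    (hq : ∀ t < T,
      ℓ (q t) (x t) ≤ -conjF Φ (fun θ => -lamLoss Φ gradΦ (μ t) θ - ℓ (p t θ) (x t)))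
    (θ : Θ) :
    ∑ t ∈ Finset.range T, ℓ (q t) (x t)
      ≤ ∑ t ∈ Finset.range T, ℓ (p t θ) (x t)
        + bregDiv Φ gradΦ (Pi.single θ 1) π := by
  set α : ℕ → Θ → ℝ := fun t θ' => ℓ (p t θ') (x t)
  set w := cumScore (gradΦ π) α
  have hπΔ := probSimplexRI_subset hπ
  have hbdd := bddAbove_conjF_image hconv hπΔ (hdiff π hπ)
  have htr (v : Θ → ℝ) (c : ℝ) := conjF_add_smul_one ⟨π, hπΔ⟩ (hbdd v) c
  have hround : ∀ t ∈ range T, ℓ (q t) (x t) ≤ conjF Φ (w t) - conjF Φ (w (t + 1)) := by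
    intro t ht
    obtain ⟨c, hc⟩ := exists_grad_eq_cumScore_add hinv₂ htrans h0 hrec t (mem_range.1 ht).le
    have := hq t (mem_range.1 ht)
    rw [conjF_neg_lamLoss_sub htr hc, ← cumScore_succ] at this
    linarith
  calc ∑ t ∈ range T, ℓ (q t) (x t)
      ≤ ∑ t ∈ range T, (conjF Φ (w t) - conjF Φ (w (t + 1))) := sum_le_sum hround
    _ = conjF Φ (gradΦ π) - conjF Φ (gradΦ π - ∑ t ∈ range T, α t) := by
      simp only [sum_range_sub', w, cumScore_zero]
      rfl
    _ ≤ (∑ t ∈ range T, α t) θ + bregDiv Φ gradΦ (Pi.single θ 1) π :=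
      conjF_sub_conjF_le_add_bregDiv (hFY π hπ) hbdd _ θ
    _ = _ := by rw [Finset.sum_apply]

/-- Theorem 2, main theorem of the paper: if `ℓ` is `Φ`-mixable, the
generalised aggregating algorithm guarantees, for every expert `θ`,
`∑_t ℓ_{x^t}(p^t) ≤ ∑_t ℓ_{x^t}(p^t_θ) + D_Φ(δ_θ, π)`. -/
theorem generalised_aggregating_algorithm_regret
    {Θ : Type*} [Fintype Θ] [Nonempty Θ] [DecidableEq Θ] {X P : Type*}
    (ℓ : P → X → ℝ)
    (Φ : (Θ → ℝ) → ℝ) (gradΦ gradConj : (Θ → ℝ) → Θ → ℝ)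
    (hconv : ConvexOn ℝ (probSimplex Θ) Φ)
    (hlsc : LowerSemicontinuousOn Φ (probSimplex Θ))
    (hdiff : ∀ μ ∈ probSimplexRI Θ,
      HasFDerivWithinAt Φ (toCLM (gradΦ μ)) (probSimplex Θ) μ)
    (hconjdiff : ∀ v : Θ → ℝ, HasFDerivAt (conjF Φ) (toCLM (gradConj v)) v)
    (hmem : ∀ v : Θ → ℝ, gradConj v ∈ probSimplexRI Θ)
    (hinv₂ : ∀ v : Θ → ℝ, ∃ c : ℝ, gradΦ (gradConj v) = v + c • (1 : Θ → ℝ))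
    (htrans : ∀ (v : Θ → ℝ) (α : ℝ), gradConj (v + α • (1 : Θ → ℝ)) = gradConj v)
    (hFY : ∀ μ ∈ probSimplexRI Θ, conjF Φ (gradΦ μ) = ip μ (gradΦ μ) - Φ μ)
    -- `Φ`-mixability of `ℓ`
    (hmix : ∀ p : Θ → P, ∀ μ ∈ probSimplexRI Θ, ∃ q : P, ∀ x : X,
      ℓ q x ≤ -conjF Φ (fun θ => -lamLoss Φ gradΦ μ θ - ℓ (p θ) x))
    -- the game: prior, observations, expert predictions
    (π : Θ → ℝ) (hπ : π ∈ probSimplexRI Θ)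
    (T : ℕ) (x : ℕ → X) (p : ℕ → Θ → P)
    -- the GAA mixture updates `μ^t = ∇Φ*(∇Φ(μ^{t−1}) − α^t)` with `α^t(θ) = ℓ_{x^t}(p^t_θ)`
    (μ : ℕ → Θ → ℝ) (h0 : μ 0 = π)
    (hrec : ∀ t < T, μ (t + 1) = gradConj (gradΦ (μ t) - fun θ => ℓ (p t θ) (x t)))
    -- the GAA predictions, satisfying the mixability inequality each round
    (q : ℕ → P)
    (hq : ∀ t < T,
      ℓ (q t) (x t) ≤ -conjF Φ (fun θ => -lamLoss Φ gradΦ (μ t) θ - ℓ (p t θ) (x t)))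
    (θ : Θ) :
    ∑ t ∈ Finset.range T, ℓ (q t) (x t)
      ≤ ∑ t ∈ Finset.range T, ℓ (p t θ) (x t)
        + bregDiv Φ gradΦ (Pi.single θ 1) π :=
  generalised_aggregating_algorithm_regret_general ℓ Φ gradΦ gradConj hconv hdiff hinv₂ htrans hFY π
    hπ T x p μ h0 hrec q hq θ
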